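/- Let D be a distribution on X × {0,1} with p = Pr_{(x,y)∼D}[y = 1], let f : X → {0,1}, and let k ≥ 1. For a bag of k i.i.d. draws (x_1,y_1),…,(x_k,y_k) from D with α = (1/k)·Σ_{j=1}^k y_j, define the EasyLLP 0-1 loss estimate ℓ_EZ(f,(B,α)) = (k(α − p) + p)·(1 − (1/k)·Σ_{j=1}^k f(x_j)) + (k(p − α) + (1 − p))·((1/k)·Σ_{j=1}^k f(x_j)). Then E[ℓ_EZ(f,(B,α))] = L(f) = Pr_{(x,y)∼D}[f(x) ≠ y], i.e., ℓ_EZ is an unbiased estimate of the instance-level classification loss. -/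

import Mathlib

open MeasureTheory Finset
open scoped ENNReal NNReal

noncomputable section

namespace LLP

/-- Real value of a Boolean label/prediction (`0` or `1`). -/
def bval (b : Bool) : ℝ := if b then 1 else 0

/-- Label proportion `α` of a bag of `k` labeled examples. -/
def labelProp {X : Type*} {k : ℕ} (bag : Fin k → X × Bool) : ℝ :=
  (∑ j, bval (bag j).2) / (k : ℝ)

/-- Average prediction `(1/k)·Σ_j f(x_j)` of `f` on a bag. -/
def predProp {X : Type*} {k : ℕ} (f : X → Bool) (bag : Fin k → X × Bool) : ℝ :=
  (∑ j, bval (f (bag j).1)) / (k : ℝ)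

/-- Instance-level classification loss `L(f) = Pr_{(x,y)∼D}[f(x) ≠ y]`. -/
def err {X : Type*} [MeasurableSpace X] (D : Measure (X × Bool)) (f : X → Bool) : ℝ :=
  (D {p | f p.1 ≠ p.2}).toReal

/-- `S` is shattered by the Boolean-valued class `F`. -/
def Shatters {Z : Type*} (F : Set (Z → Bool)) (S : Finset Z) : Prop :=
  ∀ T ⊆ S, ∃ f ∈ F, ∀ z ∈ S, (f z = true ↔ z ∈ T)

/-- The VC dimension of `F` is at most `d`. -/
def VCDimLE {Z : Type*} (F : Set (Z → Bool)) (d : ℕ) : Prop :=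
  ∀ S : Finset Z, Shatters F S → S.card ≤ d

/-- Joint distribution of `n` i.i.d. bags, each consisting of `k` i.i.d. draws from `D`. -/
def bagMeasure {X : Type*} [MeasurableSpace X] (D : Measure (X × Bool)) (n k : ℕ) :
    Measure (Fin n → Fin k → X × Bool) :=
  Measure.pi fun _ => Measure.pi fun _ => D

/-- Empirical proportional (0-1) risk: fraction of bags whose predicted proportion
mismatches the observed label proportion. -/
def empPM {X : Type*} {n k : ℕ} (f : X → Bool) (ω : Fin n → Fin k → X × Bool) : ℝ :=
  (∑ i, if predProp f (ω i) = labelProp (ω i) then (0 : ℝ) else 1) / (n : ℝ)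

/-- Empirical proportional square loss. -/
def empSQ {X : Type*} {n k : ℕ} (f : X → Bool) (ω : Fin n → Fin k → X × Bool) : ℝ :=
  (∑ i, (predProp f (ω i) - labelProp (ω i)) ^ 2) / (n : ℝ)

/-- The EasyLLP estimate of the 0-1 loss on a single bag, using marginal label
proportion `p`. -/
def ellEZ {X : Type*} {k : ℕ} (p : ℝ) (f : X → Bool) (bag : Fin k → X × Bool) : ℝ :=
  ((k : ℝ) * (labelProp bag - p) + p) * (1 - predProp f bag)
    + ((k : ℝ) * (p - labelProp bag) + (1 - p)) * predProp f bag

/-- Marginal label proportion `p = Pr[y = 1]`. -/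
def labelP {X : Type*} [MeasurableSpace X] (D : Measure (X × Bool)) : ℝ :=
  (D {q | q.2 = true}).toReal

end LLP

/-! Since `k(α - p) + p = y_j + ∑_{i ≠ j} (y_i - p)`, the estimate is the bag average of the
per-example terms `[f(x_j) ≠ y_j] + ∑_{i ≠ j} (y_i - p)(1 - 2 f(x_j))`. Each correction summand
is a product of independent factors, the first of which has mean zero, so in expectation only
the 0-1 losses survive, and each of them has mean `L(f)`. -/

namespace LLP

section Pi

variable {ι : Type*} [Fintype ι]

lemma indepFun_comp_eval_comp_eval {Ω : ι → Type*} [∀ i, MeasurableSpace (Ω i)]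
    {μ : ∀ i, Measure (Ω i)} [∀ i, IsProbabilityMeasure (μ i)] {i j : ι} (hij : i ≠ j)
    {g : Ω i → ℝ} {h : Ω j → ℝ} (hg : AEMeasurable g (μ i)) (hh : AEMeasurable h (μ j)) :
    ProbabilityTheory.IndepFun (fun ω => g (ω i)) (fun ω => h (ω j)) (Measure.pi μ) := by
  have hcoord := (ProbabilityTheory.iIndepFun_pi (μ := μ) (X := fun _ => id)
    fun _ => aemeasurable_id).indepFun hij
  refine hcoord.comp₀ (measurable_pi_apply i).aemeasurable (measurable_pi_apply j).aemeasurable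
    ?_ ?_
  · exact (measurePreserving_eval μ i).map_eq ▸ hg
  · exact (measurePreserving_eval μ j).map_eq ▸ hh

variable [DecidableEq ι] {Z : Type*} [MeasurableSpace Z] {μ : Measure Z} [IsProbabilityMeasure μ]

lemma integral_sum_comp_eval_add_sum_erase_mul {g c h : Z → ℝ} (hg : Integrable g μ)
    (hc : Integrable c μ) (hh : Integrable h μ) (hc0 : ∫ z, c z ∂μ = 0) :
    ∫ ω, ∑ j, (g (ω j) + ∑ i ∈ univ.erase j, c (ω i) * h (ω j)) ∂Measure.pi (fun _ : ι => μ)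
      = Fintype.card ι * ∫ z, g z ∂μ := by
  have hindep {i j : ι} (hij : i ≠ j) :=
    indepFun_comp_eval_comp_eval (μ := fun _ => μ) hij hc.aemeasurable hh.aemeasurable
  have hpair {j : ι} : ∀ i ∈ univ.erase j,
      Integrable (fun ω : ι → Z => c (ω i) * h (ω j)) (Measure.pi fun _ => μ) :=
    fun i hi => (hindep (ne_of_mem_erase hi)).integrable_mul (integrable_comp_eval hc)
      (integrable_comp_eval hh)
  have hsummand (j : ι) :
      Integrable (fun ω : ι → Z => g (ω j) + ∑ i ∈ univ.erase j, c (ω i) * h (ω j))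
          (Measure.pi fun _ => μ) ∧
        ∫ ω, (g (ω j) + ∑ i ∈ univ.erase j, c (ω i) * h (ω j)) ∂Measure.pi (fun _ : ι => μ)
          = ∫ z, g z ∂μ := by
    refine ⟨(integrable_comp_eval hg).add (integrable_finsetSum _ hpair), ?_⟩
    rw [integral_add (integrable_comp_eval hg) (integrable_finsetSum _ hpair),
      integral_finsetSum _ hpair, integral_comp_eval hg.aestronglyMeasurable]
    refine add_eq_left.mpr (sum_eq_zero fun i hi => ?_)
    rw [(hindep (ne_of_mem_erase hi)).integral_fun_mul_eq_mul_integral (integrable_comp_eval hc).1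
      (integrable_comp_eval hh).1, integral_comp_eval hc.1, hc0, zero_mul]
  rw [integral_finsetSum univ fun j _ => (hsummand j).1]
  simp only [(hsummand _).2, sum_const, card_univ, nsmul_eq_mul]

end Pi

section Bool

lemma bval_bne (a b : Bool) : bval (a != b) = bval a + bval b - 2 * bval a * bval b := by
  cases a <;> cases b <;> norm_num [bval]

variable {Z : Type*} [MeasurableSpace Z] {μ : Measure Z}

lemma integral_bval_comp {b : Z → Bool} (hb : Measurable b) :
    ∫ z, bval (b z) ∂μ = μ.real {z | b z = true} := by
  rw [← integral_indicator_one (s := {z | b z = true}) (hb (measurableSet_singleton true))]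
  congr with z
  cases h : b z <;> simp [bval, h]

lemma integrable_bval_comp [IsFiniteMeasure μ] {b : Z → Bool} (hb : Measurable b) :
    Integrable (fun z => bval (b z)) μ :=
  .of_bound ((Measurable.of_discrete (f := bval)).comp hb).aestronglyMeasurable 1
    (.of_forall fun z => by cases b z <;> simp [bval])

end Bool

section Sample

variable {X : Type*}

lemma labelP_eq_integral [MeasurableSpace X] (D : Measure (X × Bool)) :
    labelP D = ∫ z, bval z.2 ∂D :=
  (integral_bval_comp measurable_snd).symm

lemma err_eq_integral [MeasurableSpace X] (D : Measure (X × Bool)) {f : X → Bool}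
    (hf : Measurable f) : err D f = ∫ z, bval (f z.1 != z.2) ∂D := by
  rw [integral_bval_comp (by fun_prop)]
  simp [err, measureReal_def]

lemma ellEZ_eq_sum {k : ℕ} (hk : k ≠ 0) (p : ℝ) (f : X → Bool) (bag : Fin k → X × Bool) :
    ellEZ p f bag = (∑ j, (bval (f (bag j).1 != (bag j).2)
      + ∑ i ∈ univ.erase j, (bval (bag i).2 - p) * (1 - 2 * bval (f (bag j).1)))) / k := by
  set A := ∑ i, bval (bag i).2 - k * p + p
  have hsummand (j : Fin k) : bval (f (bag j).1 != (bag j).2)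
      + ∑ i ∈ univ.erase j, (bval (bag i).2 - p) * (1 - 2 * bval (f (bag j).1))
        = A + (1 - 2 * A) * bval (f (bag j).1) := by
    rw [← sum_mul, sum_erase_eq_sub (mem_univ j), sum_sub_distrib, bval_bne]
    simp only [A, sum_const, card_univ, Fintype.card_fin, nsmul_eq_mul]
    ring
  rw [sum_congr rfl fun j _ => hsummand j, sum_add_distrib, ← mul_sum]
  simp only [ellEZ, labelProp, predProp, A, sum_const, card_univ, Fintype.card_fin, nsmul_eq_mul]
  field_simp
  ring

end Sample

theorem easyllp_unbiased
    (X : Type*) [MeasurableSpace X] (D : Measure (X × Bool)) [IsProbabilityMeasure D]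
    (f : X → Bool) (hf : Measurable f) (k : ℕ) (hk : 1 ≤ k) :
    ∫ bag, ellEZ (labelP D) f bag ∂(Measure.pi fun _ : Fin k => D) = err D f := by
  have hk0 : k ≠ 0 := Nat.one_le_iff_ne_zero.mp hk
  have hloss : Integrable (fun z : X × Bool => bval (f z.1 != z.2)) D :=
    integrable_bval_comp (by fun_prop)
  have hcentered : Integrable (fun z : X × Bool => bval z.2 - labelP D) D :=
    (integrable_bval_comp measurable_snd).sub (integrable_const _)
  have hsign : Integrable (fun z : X × Bool => 1 - 2 * bval (f z.1)) D :=
    (integrable_const 1).sub ((integrable_bval_comp (by fun_prop)).const_mul 2)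
  have hmean : ∫ z, (bval z.2 - labelP D) ∂D = 0 := by
    rw [integral_sub (integrable_bval_comp measurable_snd) (integrable_const _),
      ← labelP_eq_integral]
    simp
  simp_rw [ellEZ_eq_sum hk0, integral_div]
  rw [integral_sum_comp_eval_add_sum_erase_mul hloss hcentered hsign hmean,
    err_eq_integral D hf, Fintype.card_fin]
  field_simp

end LLP
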